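/- The greedy algorithm for set cover, which at each step selects the set covering the largest number of still-uncovered elements, returns a cover whose cardinality is at most H_n · OPT, where n is the number of elements of the universe, OPT is the minimum cover size, and H_n = 1 + 1/2 + ... + 1/n is the n-th harmonic number. -/

import Mathlib

/-!
Let `u t` be the number of elements still uncovered after `t` greedy steps. The sets of `C` cover
these `u t` elements, so one of them covers at least `u t / |C|` of them, and by greedy choice so
does `g t`: `u t ≤ |C| (u t - u (t+1))`. Since `H_a - H_b ≥ (a - b) / a` for `b ≤ a`, each step
lowers the potential `|C| · H_{u t}` by at least `1`, and the potential starts at `|C| · H_n`.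
-/

open Finset

theorem harmonic_mono : Monotone harmonic :=
  monotone_nat_of_le_succ fun n => by
    rw [harmonic_succ]
    exact le_add_of_nonneg_right (by positivity)

theorem harmonic_nonneg (n : ℕ) : 0 ≤ harmonic n :=
  harmonic_zero ▸ harmonic_mono n.zero_le

theorem natCast_sub_le_mul_harmonic_sub {m n : ℕ} (hmn : m ≤ n) :
    (n - m : ℚ) ≤ n * (harmonic n - harmonic m) := by
  induction n, hmn using Nat.le_induction with
  | base => simp
  | succ n hmn ih =>
    have hmono : 0 ≤ harmonic n - harmonic m := sub_nonneg.2 (harmonic_mono hmn)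
    have hinv : ((n + 1 : ℕ) : ℚ) * (↑(n + 1))⁻¹ = 1 := mul_inv_cancel₀ (by positivity)
    rw [harmonic_succ, add_sub_right_comm, mul_add, hinv]
    push_cast
    nlinarith

theorem one_le_mul_harmonic_sub {a b c : ℕ} (ha : 0 < a) (h : a ≤ c * (a - b)) :
    1 ≤ (c : ℚ) * (harmonic a - harmonic b) := by
  have hba : b ≤ a := by
    by_contra! hab
    rw [Nat.sub_eq_zero_of_le hab.le, mul_zero] at h
    omega
  have hgap := natCast_sub_le_mul_harmonic_sub hba
  have h' : (a : ℚ) ≤ c * (a - b) := by rw [← Nat.cast_sub hba]; exact_mod_cast h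
  have ha' : (0 : ℚ) < a := by exact_mod_cast ha
  refine le_of_mul_le_mul_left ?_ ha'
  calc (a : ℚ) * 1 ≤ c * (a - b) := by rw [mul_one]; exact h'
    _ ≤ c * (a * (harmonic a - harmonic b)) := by gcongr
    _ = a * (c * (harmonic a - harmonic b)) := by ring

theorem natCast_le_mul_harmonic_of_descent {u : ℕ → ℕ} {c T : ℕ}
    (hpos : ∀ t < T, 0 < u t) (hdrop : ∀ t < T, u t ≤ c * (u t - u (t + 1))) :
    (T : ℚ) ≤ c * harmonic (u 0) := by
  suffices h : (T : ℚ) ≤ c * (harmonic (u 0) - harmonic (u T)) by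
    exact h.trans (mul_le_mul_of_nonneg_left (sub_le_self _ (harmonic_nonneg _)) c.cast_nonneg)
  induction T with
  | zero => simp
  | succ T ih =>
    have hstep := one_le_mul_harmonic_sub (hpos T T.lt_succ_self) (hdrop T T.lt_succ_self)
    have ih := ih (fun t ht => hpos t (ht.trans T.lt_succ_self))
      (fun t ht => hdrop t (ht.trans T.lt_succ_self))
    push_cast
    linarith

section

variable {α : Type*} [DecidableEq α]

theorem card_le_card_mul_of_forall_card_inter_le {R : Finset α} {C : Finset (Finset α)} {k : ℕ}
    (hC : ∀ x ∈ R, ∃ S ∈ C, x ∈ S) (hk : ∀ S ∈ C, (S ∩ R).card ≤ k) :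
    R.card ≤ C.card * k := by
  have hR : R ⊆ C.biUnion (· ∩ R) := fun x hx => by
    obtain ⟨S, hS, hxS⟩ := hC x hx
    exact mem_biUnion.2 ⟨S, hS, mem_inter.2 ⟨hxS, hx⟩⟩
  calc R.card ≤ ∑ S ∈ C, (S ∩ R).card := (card_le_card hR).trans card_biUnion_le
    _ ≤ ∑ _S ∈ C, k := sum_le_sum hk
    _ = C.card * k := by rw [sum_const, smul_eq_mul]

theorem card_sdiff_le_mul_of_greedy {U s g : Finset α} {C : Finset (Finset α)}
    (hC : ∀ x ∈ U, ∃ S ∈ C, x ∈ S) (hg : ∀ S ∈ C, ((S ∩ U) \ s).card ≤ ((g ∩ U) \ s).card) :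
    (U \ s).card ≤ C.card * ((U \ s).card - (U \ (g ∪ s)).card) := by
  have hgain : (U \ s).card - (U \ (g ∪ s)).card = ((g ∩ U) \ s).card := by
    have hleft : U \ (g ∪ s) = (U \ s) \ g := by ext; simp only [mem_sdiff, mem_union]; tauto
    have hnew : (g ∩ U) \ s = (U \ s) ∩ g := by ext; simp only [mem_sdiff, mem_inter]; tauto
    rw [hleft, hnew, ← card_sdiff_add_card_inter (U \ s) g, Nat.add_sub_cancel_left]
  rw [hgain]
  refine card_le_card_mul_of_forall_card_inter_le (fun x hx => hC x (mem_sdiff.1 hx).1) ?_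
  intro S hS
  rw [← inter_sdiff_assoc]
  exact hg S hS

end

theorem greedy_set_cover_harmonic_bound_general {α : Type*} [DecidableEq α]
    (U : Finset α) (F : Finset (Finset α))
    (g : ℕ → Finset α)
    (hgreedy : ∀ t, ∀ S ∈ F,
      ((S ∩ U) \ (Finset.range t).biUnion g).card ≤
        ((g t ∩ U) \ (Finset.range t).biUnion g).card)
    (T : ℕ)
    (hTmin : ∀ t < T, ¬ U ⊆ (Finset.range t).biUnion g)
    (C : Finset (Finset α)) (hCF : C ⊆ F) (hC : ∀ x ∈ U, ∃ S ∈ C, x ∈ S) :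
    (T : ℝ) ≤ (∑ k ∈ Finset.Icc 1 U.card, (1 : ℝ) / k) * C.card := by
  set u : ℕ → ℕ := fun t => (U \ (range t).biUnion g).card with hu
  have hpos : ∀ t < T, 0 < u t := fun t ht =>
    card_pos.2 (sdiff_nonempty.2 (hTmin t ht))
  have hdrop : ∀ t < T, u t ≤ C.card * (u t - u (t + 1)) := fun t _ => by
    simp only [hu, range_add_one, biUnion_insert]
    exact card_sdiff_le_mul_of_greedy hC fun S hS => hgreedy t S (hCF hS)
  have hbound := natCast_le_mul_harmonic_of_descent hpos hdrop
  have hu0 : u 0 = U.card := by simp [hu]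
  rw [hu0] at hbound
  have hH : (∑ k ∈ Icc 1 U.card, (1 : ℝ) / k) = (harmonic U.card : ℝ) := by
    simp [harmonic_eq_sum_Icc]
  rw [hH, mul_comm]
  exact_mod_cast hbound

/-- The greedy set-cover algorithm (each step picking a set of the family `F`
covering the most still-uncovered elements of the universe `U`) stops after `T` steps with
a cover, and `T ≤ H_n · OPT` where `n = |U|`, `H_n` is the `n`-th harmonic number and
`OPT` the minimum cover size (the bound holds against every cover `C`). -/
theorem greedy_set_cover_harmonic_bound {α : Type*} [DecidableEq α]
    (U : Finset α) (F : Finset (Finset α))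
    (hUcov : ∀ x ∈ U, ∃ S ∈ F, x ∈ S)
    (g : ℕ → Finset α) (hg : ∀ t, g t ∈ F)
    (hgreedy : ∀ t, ∀ S ∈ F,
      ((S ∩ U) \ (Finset.range t).biUnion g).card ≤
        ((g t ∩ U) \ (Finset.range t).biUnion g).card)
    (T : ℕ) (hT : U ⊆ (Finset.range T).biUnion g)
    (hTmin : ∀ t < T, ¬ U ⊆ (Finset.range t).biUnion g)
    (C : Finset (Finset α)) (hCF : C ⊆ F) (hC : ∀ x ∈ U, ∃ S ∈ C, x ∈ S) :
    (T : ℝ) ≤ (∑ k ∈ Finset.Icc 1 U.card, (1 : ℝ) / k) * C.card :=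
  greedy_set_cover_harmonic_bound_general U F g hgreedy T hTmin C hCF hC
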